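/- arXiv:1806.03320 — 3 statements merged into one kernel-verified Lean document; each statement's English description precedes it below -/
import Mathlib

section
/- Let n ≥ 2 be the largest natural number with m ≥ binom(n,2)+1. Then for every surjective colouring Δ : ℕ^(2) → [m], the set F_Δ has at least n elements. -/
/-- The set of colours appearing on edges inside `X` under the edge-colouring `Δ`
of the complete graph on `ℕ`. -/
def colorsOn {C : Type*} (Δ : ℕ → ℕ → C) (X : Set ℕ) : Set C :=
  {c | ∃ x ∈ X, ∃ y ∈ X, x ≠ y ∧ Δ x y = c}

/-- `F_Δ`: the set of values `γ(X)` (number of colours inside `X`)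
over infinite `X ⊆ ℕ`. -/
def FDelta {C : Type*} (Δ : ℕ → ℕ → C) : Set ℕ :=
  {k | ∃ X : Set ℕ, X.Infinite ∧ (colorsOn Δ X).ncard = k}

/-!
By Ramsey's theorem there is an infinite monochromatic set `Y`, which can be shrunk so that every
vertex of a finite set `S` spanning all colours sees `Y` in a single colour. Write `γ` for
`numColorsOn` and `φ v` (`numFDeltaLE`) for the number of elements of `F_Δ` that are at most `v`,
and add the vertices of `S` to `Y` one at a time. When `u` is added to `X ⊇ Y`, every new colour
other than the one `u` sends to `Y` lies on an edge from `u` into `X`; adding the endpoints of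
these edges to `Y ∪ {u}` one by one strictly increases `γ`, which exhibits that many distinct
values of `F_Δ` below `γ (X ∪ {u})`. Hence `γ (X ∪ {u}) ≤ γ X + φ (γ (X ∪ {u}))`, and by induction
`γ X ≤ binom(φ (γ X) + 1, 2)`. At `X = Y ∪ S` this reads `m ≤ binom(|F_Δ| + 1, 2)`.
-/

open Filter

theorem Nat.succ_choose_two (q : ℕ) : (q + 1).choose 2 = q.choose 2 + q := by
  rw [Nat.choose_succ_succ', Nat.choose_one_right, add_comm]

theorem Set.Infinite.exists_infinite_inter_preimage_singleton {α β : Type*} [Finite β]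
    {s : Set α} (hs : s.Infinite) (f : α → β) : ∃ b, (s ∩ f ⁻¹' {b}).Infinite := by
  by_contra! h
  exact hs ((Set.finite_iUnion h).subset fun x hx => Set.mem_iUnion.2 ⟨f x, hx, rfl⟩)

section Colouring

variable {C : Type*} (Δ : ℕ → ℕ → C)

theorem exists_infinite_monochromatic [Finite C] (hsym : ∀ x y, Δ x y = Δ y x) :
    ∃ X : Set ℕ, X.Infinite ∧ ∃ c, ∀ x ∈ X, ∀ y ∈ X, x ≠ y → Δ x y = c := by
  let U := hyperfilter ℕ
  -- `link a` is the colour of the edges `a y` for `U`-almost all `y`; the monochromatic sequence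
  -- is then chosen greedily inside the `U`-large set of vertices `a` with `link a = c`.
  choose link hlink using fun a =>
    (U.eventually_exists_iff (P := fun c y => Δ a y = c)).1 (.of_forall fun _ => ⟨_, rfl⟩)
  obtain ⟨c, hc⟩ :=
    (U.eventually_exists_iff (P := fun c a => link a = c)).1 (.of_forall fun _ => ⟨_, rfl⟩)
  obtain ⟨f, -, hf⟩ := exists_seq_of_forall_finset_exists (fun a => link a = c)
      (fun a b => a < b ∧ Δ a b = c) fun s hs =>
    (hc.and <| (eventually_all_finset s).2 fun x hx =>
      ((eventually_gt_atTop x).filter_mono Nat.hyperfilter_le_atTop).and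
        ((hlink x).mono fun _ hy => hy.trans (hs x hx))).exists
  have hf_mono : StrictMono f := fun i j h => (hf i j h).1
  refine ⟨Set.range f, Set.infinite_range_of_injective hf_mono.injective, c, ?_⟩
  rintro _ ⟨i, rfl⟩ _ ⟨j, rfl⟩ hij
  rcases lt_or_gt_of_ne (ne_of_apply_ne f hij) with h | h
  · exact (hf i j h).2
  · rw [hsym]
    exact (hf j i h).2

theorem exists_infinite_subset_disjoint_links_const [Finite C] (S : Finset ℕ) {Y : Set ℕ}
    (hY : Y.Infinite) :
    ∃ Y' ⊆ Y, Y'.Infinite ∧ Disjoint Y' S ∧ ∀ u ∈ S, ∃ c, ∀ y ∈ Y', Δ u y = c := by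
  obtain ⟨k, hk⟩ := (hY.sdiff S.finite_toSet).exists_infinite_inter_preimage_singleton
    fun y (u : S) => Δ u y
  exact ⟨_, fun y hy => hy.1.1, hk, Set.disjoint_left.2 fun y hy => hy.1.2,
    fun u hu => ⟨k ⟨u, hu⟩, fun y hy => congrFun hy.2 ⟨u, hu⟩⟩⟩

noncomputable def numColorsOn (X : Set ℕ) : ℕ := (colorsOn Δ X).ncard

noncomputable def numFDeltaLE (v : ℕ) : ℕ := (FDelta Δ ∩ Set.Iic v).ncard

theorem colorsOn_mono : Monotone (colorsOn Δ) := by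
  rintro X X' h c ⟨x, hx, y, hy, hxy, hc⟩
  exact ⟨x, h hx, y, h hy, hxy, hc⟩

theorem numColorsOn_mono [Finite C] : Monotone (numColorsOn Δ) :=
  fun _ _ h => Set.ncard_le_ncard (colorsOn_mono Δ h)

theorem numColorsOn_mem_FDelta {X : Set ℕ} (hX : X.Infinite) : numColorsOn Δ X ∈ FDelta Δ :=
  ⟨X, hX, rfl⟩

theorem FDelta_finite [Finite C] : (FDelta Δ).Finite :=
  (Set.finite_Iic (Nat.card C)).subset fun _ ⟨_, _, hX⟩ => hX ▸ Set.ncard_le_card _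

theorem numFDeltaLE_mono : Monotone (numFDeltaLE Δ) := fun _ _ h =>
  Set.ncard_le_ncard (Set.inter_subset_inter_right _ (Set.Iic_subset_Iic.2 h))
    ((Set.finite_Iic _).inter_of_right _)

theorem numFDeltaLE_pos {v : ℕ} (hv : v ∈ FDelta Δ) : 0 < numFDeltaLE Δ v :=
  (Set.ncard_pos ((Set.finite_Iic _).inter_of_right _)).2 ⟨v, hv, Set.self_mem_Iic⟩

theorem numFDeltaLE_lt_of_lt {v w : ℕ} (h : v < w) (hw : w ∈ FDelta Δ) :
    numFDeltaLE Δ v < numFDeltaLE Δ w := by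
  have hsub : FDelta Δ ∩ Set.Iic v ⊆ FDelta Δ ∩ Set.Iic w :=
    Set.inter_subset_inter_right _ (Set.Iic_subset_Iic.2 h.le)
  refine Set.ncard_lt_ncard ((Set.ssubset_iff_of_subset hsub).2 ⟨w, ⟨hw, Set.self_mem_Iic⟩, ?_⟩)
    ((Set.finite_Iic _).inter_of_right _)
  exact fun hw' => h.not_ge hw'.2

theorem numFDeltaLE_le_ncard [Finite C] (v : ℕ) : numFDeltaLE Δ v ≤ (FDelta Δ).ncard :=
  Set.ncard_le_ncard Set.inter_subset_left (FDelta_finite Δ)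

theorem ncard_add_one_le_numFDeltaLE {α : Type*} {N : Set α} (hN : N.Finite) (f : Set α → ℕ)
    (hfF : ∀ A ⊆ N, f A ∈ FDelta Δ) (hf : ∀ A ⊆ N, ∀ c ∈ N, c ∉ A → f A < f (insert c A)) :
    N.ncard + 1 ≤ numFDeltaLE Δ (f N) := by
  refine Set.Finite.induction_on_subset (motive := fun A _ => A.ncard + 1 ≤ numFDeltaLE Δ (f A))
    N hN ?_ fun {c A} hc hA hcA ih => ?_
  · rw [Set.ncard_empty]
    exact numFDeltaLE_pos Δ (hfF ∅ (Set.empty_subset _))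
  · rw [Set.ncard_insert_of_notMem hcA (hN.subset hA)]
    exact (Nat.succ_le_succ ih).trans
      (numFDeltaLE_lt_of_lt Δ (hf A hA c hc hcA) (hfF _ (Set.insert_subset hc hA)))

theorem colorsOn_insert_diff_subset_image (hsym : ∀ x y, Δ x y = Δ y x) {u : ℕ} {Z X : Set ℕ}
    (hZX : Z ⊆ X) : colorsOn Δ (insert u Z) \ colorsOn Δ X ⊆ Δ u '' Z := by
  rintro _ ⟨⟨x, hx, y, hy, hxy, rfl⟩, hnew⟩
  rcases hx with rfl | hx <;> rcases hy with rfl | hy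
  · exact absurd rfl hxy
  · exact ⟨y, hy, rfl⟩
  · exact ⟨x, hx, hsym _ _⟩
  · exact absurd ⟨x, hZX hx, y, hZX hy, hxy, rfl⟩ hnew

theorem image_subset_colorsOn_insert {u : ℕ} {Z : Set ℕ} (hu : u ∉ Z) :
    Δ u '' Z ⊆ colorsOn Δ (insert u Z) := by
  rintro _ ⟨z, hz, rfl⟩
  exact ⟨u, Set.mem_insert _ _, z, Set.mem_insert_of_mem _ hz, (ne_of_mem_of_not_mem hz hu).symm,
    rfl⟩

theorem colorsOn_insert_union_sep_diff_eq (hsym : ∀ x y, Δ x y = Δ y x) {Y X : Set ℕ} {u : ℕ}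
    {cu : C} (hYX : Y ⊆ X) (hu : u ∉ X) (hlink : ∀ y ∈ Y, Δ u y = cu) {A : Set C}
    (hA : A ⊆ (colorsOn Δ (insert u X) \ colorsOn Δ X) \ {cu}) :
    (colorsOn Δ (insert u (Y ∪ {x ∈ X | Δ u x ∈ A})) \ colorsOn Δ X) \ {cu} = A := by
  have hsub : Y ∪ {x ∈ X | Δ u x ∈ A} ⊆ X := Set.union_subset hYX (Set.sep_subset _ _)
  refine Set.Subset.antisymm ?_ fun c hcA => ?_
  · rintro c ⟨hc, hcu⟩
    obtain ⟨z, hz | hz, rfl⟩ := colorsOn_insert_diff_subset_image Δ hsym hsub hc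
    · exact absurd (hlink z hz) hcu
    · exact hz.2
  · obtain ⟨⟨hc, hcX⟩, hcu⟩ := hA hcA
    obtain ⟨x, hx, rfl⟩ := colorsOn_insert_diff_subset_image Δ hsym subset_rfl ⟨hc, hcX⟩
    exact ⟨⟨image_subset_colorsOn_insert Δ (fun h => hu (hsub h)) ⟨x, Or.inr ⟨hx, hcA⟩, rfl⟩,
      hcX⟩, hcu⟩

theorem numColorsOn_le_add_ncard_diff_add_one [Finite C] (X X' : Set ℕ) (c : C) :
    numColorsOn Δ X' ≤ numColorsOn Δ X + (((colorsOn Δ X' \ colorsOn Δ X) \ {c}).ncard + 1) := by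
  have hsub : colorsOn Δ X' ⊆ colorsOn Δ X ∪ insert c ((colorsOn Δ X' \ colorsOn Δ X) \ {c}) :=
    fun d hd => by
      simp only [Set.mem_union, Set.mem_insert_iff, Set.mem_sdiff, Set.mem_singleton_iff]
      tauto
  calc numColorsOn Δ X'
      ≤ (colorsOn Δ X ∪ insert c ((colorsOn Δ X' \ colorsOn Δ X) \ {c})).ncard :=
        Set.ncard_le_ncard hsub
    _ ≤ numColorsOn Δ X + (insert c ((colorsOn Δ X' \ colorsOn Δ X) \ {c})).ncard :=
        Set.ncard_union_le _ _
    _ ≤ _ := Nat.add_le_add_left (Set.ncard_insert_le _ _) _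

theorem numColorsOn_insert_le [Finite C] (hsym : ∀ x y, Δ x y = Δ y x) {Y X : Set ℕ} {u : ℕ}
    {cu : C} (hY : Y.Infinite) (hYX : Y ⊆ X) (hu : u ∉ X) (hlink : ∀ y ∈ Y, Δ u y = cu) :
    numColorsOn Δ (insert u X) ≤ numColorsOn Δ X + numFDeltaLE Δ (numColorsOn Δ (insert u X)) := by
  let N : Set C := (colorsOn Δ (insert u X) \ colorsOn Δ X) \ {cu}
  let Z : Set C → Set ℕ := fun A => insert u (Y ∪ {x ∈ X | Δ u x ∈ A})
  have hZ_new : ∀ A ⊆ N, (colorsOn Δ (Z A) \ colorsOn Δ X) \ {cu} = A := fun _ hA =>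
    colorsOn_insert_union_sep_diff_eq Δ hsym hYX hu hlink hA
  have hZ_mono : Monotone Z := fun A A' h =>
    Set.insert_subset_insert (Set.union_subset_union_right _ fun x hx => ⟨hx.1, h hx.2⟩)
  have hN_le : N.ncard + 1 ≤ numFDeltaLE Δ (numColorsOn Δ (Z N)) := by
    refine ncard_add_one_le_numFDeltaLE Δ (Set.toFinite N) (fun A => numColorsOn Δ (Z A))
      (fun A _ => numColorsOn_mem_FDelta Δ (hY.mono ?_)) fun A hA c hc hcA => ?_
    · exact fun y hy => Set.mem_insert_of_mem _ (Or.inl hy)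
    refine Set.ncard_lt_ncard ((Set.ssubset_iff_of_subset
      (colorsOn_mono Δ (hZ_mono (Set.subset_insert c A)))).2 ⟨c, ?_, fun hcZ => hcA ?_⟩)
    · exact ((hZ_new _ (Set.insert_subset hc hA)).ge (Set.mem_insert c A)).1.1
    · rw [← hZ_new A hA]
      exact ⟨⟨hcZ, hc.1.2⟩, hc.2⟩
  have hZN : numColorsOn Δ (Z N) ≤ numColorsOn Δ (insert u X) :=
    numColorsOn_mono Δ (Set.insert_subset_insert (Set.union_subset hYX (Set.sep_subset _ _)))
  linarith [numColorsOn_le_add_ncard_diff_add_one Δ X (insert u X) cu,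
    numFDeltaLE_mono Δ hZN]

theorem numColorsOn_union_le_choose [Finite C] (hsym : ∀ x y, Δ x y = Δ y x) {Y : Set ℕ}
    (hY : Y.Infinite) {c₀ : C} (hY_mono : ∀ x ∈ Y, ∀ y ∈ Y, x ≠ y → Δ x y = c₀) (S : Finset ℕ)
    (hYS : Disjoint Y S) (hlinks : ∀ u ∈ S, ∃ c, ∀ y ∈ Y, Δ u y = c) :
    numColorsOn Δ (Y ∪ S) ≤ (numFDeltaLE Δ (numColorsOn Δ (Y ∪ S)) + 1).choose 2 := by
  induction S using Finset.induction_on with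
  | empty =>
    rw [Finset.coe_empty, Set.union_empty]
    have hγ : numColorsOn Δ Y ≤ 1 := by
      refine (Set.ncard_le_ncard (t := {c₀}) ?_).trans (Set.ncard_singleton _).le
      rintro _ ⟨x, hx, y, hy, hxy, rfl⟩
      exact hY_mono x hx y hy hxy
    have hpos := numFDeltaLE_pos Δ (numColorsOn_mem_FDelta Δ hY)
    have := Nat.succ_choose_two (numFDeltaLE Δ (numColorsOn Δ Y))
    omega
  | @insert u S huS ih =>
    rw [Finset.coe_insert, Set.union_insert]
    have hYS' : Disjoint Y S := hYS.mono_right (by simp)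
    have ih := ih hYS' fun v hv => hlinks v (Finset.mem_insert_of_mem hv)
    obtain ⟨cu, hcu⟩ := hlinks u (Finset.mem_insert_self u S)
    have hu : u ∉ Y ∪ S := fun h => h.elim
      (fun huY => Set.disjoint_left.1 hYS huY (Finset.mem_insert_self u S)) huS
    have hjump := numColorsOn_insert_le Δ hsym hY Set.subset_union_left hu hcu
    have hb_mem : numColorsOn Δ (insert u (Y ∪ S)) ∈ FDelta Δ :=
      numColorsOn_mem_FDelta Δ (hY.mono fun y hy => Set.mem_insert_of_mem _ (Or.inl hy))
    have hab : numColorsOn Δ (Y ∪ S) ≤ numColorsOn Δ (insert u (Y ∪ S)) :=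
      numColorsOn_mono Δ (Set.subset_insert u _)
    set a := numColorsOn Δ (Y ∪ S)
    set b := numColorsOn Δ (insert u (Y ∪ S))
    rcases hab.eq_or_lt with hab | hab
    · rwa [← hab]
    · have hφ : numFDeltaLE Δ a + 1 ≤ numFDeltaLE Δ b := numFDeltaLE_lt_of_lt Δ hab hb_mem
      calc b ≤ a + numFDeltaLE Δ b := hjump
        _ ≤ (numFDeltaLE Δ a + 1).choose 2 + numFDeltaLE Δ b := Nat.add_le_add_right ih _
        _ ≤ (numFDeltaLE Δ b).choose 2 + numFDeltaLE Δ b :=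
          Nat.add_le_add_right (Nat.choose_le_choose 2 hφ) _
        _ = (numFDeltaLE Δ b + 1).choose 2 := (Nat.succ_choose_two _).symm

theorem card_le_choose_ncard_FDelta_add_one [Finite C] (hsym : ∀ x y, Δ x y = Δ y x)
    (hsurj : ∀ c, ∃ x y, x ≠ y ∧ Δ x y = c) : Nat.card C ≤ ((FDelta Δ).ncard + 1).choose 2 := by
  choose a b hab hΔ using hsurj
  let S : Finset ℕ := ((Set.finite_range a).union (Set.finite_range b)).toFinset
  obtain ⟨X, hX, c₀, hX_mono⟩ := exists_infinite_monochromatic Δ hsym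
  obtain ⟨Y, hYX, hY, hYS, hlinks⟩ := exists_infinite_subset_disjoint_links_const Δ S hX
  have hall : numColorsOn Δ (Y ∪ S) = Nat.card C := by
    rw [numColorsOn, ← Set.ncard_univ]
    congr
    exact Set.eq_univ_of_forall fun c =>
      ⟨a c, Or.inr (by simp [S]), b c, Or.inr (by simp [S]), hab c, hΔ c⟩
  have key := numColorsOn_union_le_choose Δ hsym hY
    (fun x hx y hy => hX_mono x (hYX hx) y (hYX hy)) S hYS hlinks
  rw [hall] at key
  exact key.trans (Nat.choose_le_choose 2 (Nat.add_le_add_right (numFDeltaLE_le_ncard Δ _) 1))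

end Colouring

theorem stmt4_general {m n : ℕ} (h1 : n.choose 2 + 1 ≤ m)
    (Δ : ℕ → ℕ → Fin m)
    (hsym : ∀ x y, Δ x y = Δ y x)
    (hsurj : ∀ c : Fin m, ∃ x y : ℕ, x ≠ y ∧ Δ x y = c) :
    n ≤ (FDelta Δ).ncard := by
  by_contra! h
  have hm := card_le_choose_ncard_FDelta_add_one Δ hsym hsurj
  rw [Nat.card_fin] at hm
  have := Nat.choose_le_choose 2 (show (FDelta Δ).ncard + 1 ≤ n by omega)
  omega

/-- Narayanan's theorem: if `n ≥ 2` is the largest natural number with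
`m ≥ binom(n,2)+1`, then `|F_Δ| ≥ n` for every surjective `m`-colouring `Δ`. -/
theorem stmt4 {m n : ℕ} (hn : 2 ≤ n) (h1 : n.choose 2 + 1 ≤ m)
    (h2 : m < (n + 1).choose 2 + 1)
    (Δ : ℕ → ℕ → Fin m)
    (hsym : ∀ x y, Δ x y = Δ y x)
    (hsurj : ∀ c : Fin m, ∃ x y : ℕ, x ≠ y ∧ Δ x y = c) :
    n ≤ (FDelta Δ).ncard :=
  stmt4_general h1 Δ hsym hsurj
end

section
/- For every n ≥ 2 there exists a surjective colouring Δ : ℕ^(2) → [binom(n,2)+2] such that F_Δ = {1} ∪ { binom(t,2)+2 : 1 ≤ t ≤ n }; in particular |F_Δ| = n+1. -/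
/-!
Colour each edge inside `{0, …, n - 1}` by the edge itself, all edges inside `[n, ∞)` by one
colour and all crossing edges by another. An infinite `X` has two vertices `≥ n`, so if it meets
`{0, …, n - 1}` in `t ≥ 1` points it sees `choose t 2` inner colours and both other colours,
and otherwise only the outer one. Relabelling the `choose n 2 + 2` colours that occur bijectively
by `Fin (choose n 2 + 2)` changes no value of `γ`.
-/

open Set

section Relabel

variable {C D : Type*}

theorem colorsOn_comp (f : C → D) (Δ : ℕ → ℕ → C) (X : Set ℕ) :
    colorsOn (fun x y => f (Δ x y)) X = f '' colorsOn Δ X := by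
  ext d
  simp only [colorsOn, mem_ofPred_eq, mem_image]
  constructor
  · rintro ⟨x, hx, y, hy, hxy, rfl⟩
    exact ⟨Δ x y, ⟨x, hx, y, hy, hxy, rfl⟩, rfl⟩
  · rintro ⟨_, ⟨x, hx, y, hy, hxy, rfl⟩, rfl⟩
    exact ⟨x, hx, y, hy, hxy, rfl⟩

theorem colorsOn_mono_s8 (Δ : ℕ → ℕ → C) {X Y : Set ℕ} (h : X ⊆ Y) : colorsOn Δ X ⊆ colorsOn Δ Y :=
  fun _ ⟨x, hx, y, hy, hxy, hc⟩ => ⟨x, h hx, y, h hy, hxy, hc⟩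

theorem FDelta_comp_of_injOn {f : C → D} {Δ : ℕ → ℕ → C}
    (hf : InjOn f (colorsOn Δ univ)) : FDelta (fun x y => f (Δ x y)) = FDelta Δ := by
  ext k
  simp only [FDelta, mem_ofPred_eq, colorsOn_comp,
    (hf.mono (colorsOn_mono_s8 Δ (subset_univ _))).ncard_image]

theorem exists_bijOn_fin_of_ncard_eq {s : Set C} {k : ℕ} [NeZero k] (hs : s.ncard = k) :
    ∃ f : C → Fin k, BijOn f s univ := by
  have hfin : s.Finite := finite_of_ncard_ne_zero (hs ▸ NeZero.ne k)
  refine hfin.exists_bijOn_of_encard_eq ?_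
  rw [hfin.cast_ncard_eq.symm, hs, encard_univ, ENat.card_eq_coe_fintype_card, Fintype.card_fin]

end Relabel

theorem Nat.choose_two_strictMonoOn : StrictMonoOn (fun t : ℕ => t.choose 2) (Ici 1) := by
  intro a ha b _ hab
  have hsucc : (a + 1).choose 2 = a.choose 2 + a := by
    rw [Nat.choose_succ_succ, Nat.choose_one_right, add_comm]
  have hle : (a + 1).choose 2 ≤ b.choose 2 := Nat.choose_le_choose 2 hab
  have ha : 1 ≤ a := ha
  show a.choose 2 < b.choose 2
  omega

inductive SplitColour
  | inner (e : Sym2 ℕ)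
  | outer
  | cross

open SplitColour

/-- The paper's rainbow block `{1, …, n}` is `Iio n = {0, …, n - 1}` here. -/
def splitColouring (n x y : ℕ) : SplitColour :=
  if x < n ∧ y < n then inner s(x, y) else if n ≤ x ∧ n ≤ y then outer else cross

namespace splitColouring

variable {n x y : ℕ}

theorem comm (n x y : ℕ) : splitColouring n x y = splitColouring n y x := by
  simp only [splitColouring, Sym2.eq_swap, and_comm]

theorem of_lt_of_lt (hx : x < n) (hy : y < n) : splitColouring n x y = inner s(x, y) :=
  if_pos ⟨hx, hy⟩

theorem of_le_of_le (hx : n ≤ x) (hy : n ≤ y) : splitColouring n x y = outer := by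
  rw [splitColouring, if_neg (by omega), if_pos ⟨hx, hy⟩]

theorem of_lt_of_le (hx : x < n) (hy : n ≤ y) : splitColouring n x y = cross := by
  rw [splitColouring, if_neg (by omega), if_neg (by omega)]

theorem colorsOn_eq_singleton {X : Set ℕ} (hX : X.Infinite) (hXn : ∀ x ∈ X, n ≤ x) :
    colorsOn (splitColouring n) X = {outer} := by
  refine eq_singleton_iff_unique_mem.2 ⟨?_, ?_⟩
  · obtain ⟨x, hx, y, hy, hxy⟩ := hX.nontrivial
    exact ⟨x, hx, y, hy, hxy, of_le_of_le (hXn x hx) (hXn y hy)⟩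
  · rintro _ ⟨x, hx, y, hy, -, rfl⟩
    exact of_le_of_le (hXn x hx) (hXn y hy)

theorem colorsOn_eq {X : Set ℕ} (hX : X.Infinite) (hne : (X ∩ Iio n).Nonempty) :
    colorsOn (splitColouring n) X =
      insert outer (insert cross (inner '' (Sym2.mk.uncurry '' (X ∩ Iio n).offDiag))) := by
  obtain ⟨u, hu, v, hv, huv⟩ := (hX.sdiff (finite_Iio n)).nontrivial
  simp only [mem_sdiff, mem_Iio, not_lt] at hu hv
  obtain ⟨a, ha, han⟩ := hne
  ext c
  simp only [colorsOn, mem_ofPred_eq, mem_insert_iff, mem_image, mem_offDiag, mem_inter_iff,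
    mem_Iio, Prod.exists, Function.uncurry_apply_pair]
  constructor
  · rintro ⟨x, hx, y, hy, hxy, rfl⟩
    rcases lt_or_ge x n with hxn | hxn <;> rcases lt_or_ge y n with hyn | hyn
    · exact .inr (.inr ⟨_, ⟨x, y, ⟨⟨hx, hxn⟩, ⟨hy, hyn⟩, hxy⟩, rfl⟩, (of_lt_of_lt hxn hyn).symm⟩)
    · exact .inr (.inl (of_lt_of_le hxn hyn))
    · exact .inr (.inl (comm n x y ▸ of_lt_of_le hyn hxn))
    · exact .inl (of_le_of_le hxn hyn)
  · rintro (rfl | rfl | ⟨_, ⟨x, y, ⟨⟨hx, hxn⟩, ⟨hy, hyn⟩, hxy⟩, rfl⟩, rfl⟩)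
    · exact ⟨u, hu.1, v, hv.1, huv, of_le_of_le hu.2 hv.2⟩
    · exact ⟨a, ha, u, hu.1, (han.trans_le hu.2).ne, of_lt_of_le han hu.2⟩
    · exact ⟨x, hx, y, hy, hxy, of_lt_of_lt hxn hyn⟩

theorem ncard_colorsOn {X : Set ℕ} (hX : X.Infinite) (hne : (X ∩ Iio n).Nonempty) :
    (colorsOn (splitColouring n) X).ncard = (X ∩ Iio n).ncard.choose 2 + 2 := by
  set F := ((finite_Iio n).inter_of_right X).toFinset
  have hF : (F : Set ℕ) = X ∩ Iio n := Finite.coe_toFinset _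
  have hoff : Sym2.mk.uncurry '' (X ∩ Iio n).offDiag = ↑(F.offDiag.image Sym2.mk.uncurry) := by
    rw [Finset.coe_image, Finset.coe_offDiag, hF]
  rw [colorsOn_eq hX hne, hoff, ncard_insert_of_notMem (by simp), ncard_insert_of_notMem (by simp),
    ncard_image_of_injective _ (fun _ _ => inner.inj), ncard_coe_finset, Sym2.card_image_offDiag,
    ← hF, ncard_coe_finset]

theorem FDelta_eq (n : ℕ) :
    FDelta (splitColouring n) = {1} ∪ {k | ∃ t : ℕ, 1 ≤ t ∧ t ≤ n ∧ k = t.choose 2 + 2} := by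
  ext k
  simp only [FDelta, mem_ofPred_eq, mem_union, mem_singleton_iff]
  constructor
  · rintro ⟨X, hX, rfl⟩
    rcases (X ∩ Iio n).eq_empty_or_nonempty with hemp | hne
    · have hXn : ∀ x ∈ X, n ≤ x := fun x hx => not_lt.1 fun hxn => hemp.subset ⟨hx, hxn⟩
      exact .inl (by rw [colorsOn_eq_singleton hX hXn, ncard_singleton])
    · have hfin : (X ∩ Iio n).Finite := (finite_Iio n).inter_of_right X
      refine .inr ⟨_, (ncard_pos hfin).2 hne, ?_, ncard_colorsOn hX hne⟩
      exact (ncard_le_ncard inter_subset_right (finite_Iio n)).trans (ncard_Iio_nat n).le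
  · rintro (rfl | ⟨t, ht, htn, rfl⟩)
    · exact ⟨Ici n, Ici_infinite n, by
        rw [colorsOn_eq_singleton (Ici_infinite n) fun _ => id, ncard_singleton]⟩
    · have hX : (Iio t ∪ Ici n).Infinite := (Ici_infinite n).mono subset_union_right
      have hlow : (Iio t ∪ Ici n) ∩ Iio n = Iio t := by
        ext x; simp only [mem_inter_iff, mem_union, mem_Iio, mem_Ici]; omega
      refine ⟨_, hX, ?_⟩
      rw [ncard_colorsOn hX (by rw [hlow]; exact ⟨0, ht⟩), hlow, ncard_Iio_nat]

end splitColouring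

theorem ncard_one_union_choose_two_add_two (n : ℕ) :
    ({1} ∪ {k | ∃ t : ℕ, 1 ≤ t ∧ t ≤ n ∧ k = t.choose 2 + 2} : Set ℕ).ncard = n + 1 := by
  have himage : {k | ∃ t : ℕ, 1 ≤ t ∧ t ≤ n ∧ k = t.choose 2 + 2} =
      (fun t => t.choose 2 + 2) '' Icc 1 n := by
    ext k; simp only [mem_ofPred_eq, mem_image, mem_Icc]
    exact ⟨fun ⟨t, h1, h2, hk⟩ => ⟨t, ⟨h1, h2⟩, hk.symm⟩, fun ⟨t, ⟨h1, h2⟩, hk⟩ => ⟨t, h1, h2, hk.symm⟩⟩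
  have hinj : InjOn (fun t => t.choose 2 + 2) (Icc 1 n) :=
    fun a ha b hb hab => Nat.choose_two_strictMonoOn.injOn ha.1 hb.1 (Nat.add_right_cancel hab)
  rw [himage, singleton_union, ncard_insert_of_notMem (by simp), hinj.ncard_image,
    ncard_Icc_nat]
  omega

/-- For every `n ≥ 2` there is a surjective colouring with `binom(n,2)+2` colours
whose `F_Δ` is exactly `{1} ∪ { binom(t,2)+2 : 1 ≤ t ≤ n }`, of size `n+1`. -/
theorem stmt8 {n : ℕ} (hn : 2 ≤ n) :
    ∃ Δ : ℕ → ℕ → Fin (n.choose 2 + 2),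
      (∀ x y, Δ x y = Δ y x) ∧
      (∀ c : Fin (n.choose 2 + 2), ∃ x y : ℕ, x ≠ y ∧ Δ x y = c) ∧
      FDelta Δ = {1} ∪ {k | ∃ t : ℕ, 1 ≤ t ∧ t ≤ n ∧ k = t.choose 2 + 2} ∧
      (FDelta Δ).ncard = n + 1 := by
  have hcard : (colorsOn (splitColouring n) univ).ncard = n.choose 2 + 2 := by
    rw [splitColouring.ncard_colorsOn infinite_univ ⟨0, trivial, by simp only [mem_Iio]; omega⟩,
      univ_inter, ncard_Iio_nat]
  obtain ⟨f, hf⟩ := exists_bijOn_fin_of_ncard_eq hcard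
  have hFDelta := (FDelta_comp_of_injOn hf.injOn).trans (splitColouring.FDelta_eq n)
  refine ⟨fun x y => f (splitColouring n x y), fun x y => congrArg f (splitColouring.comm n x y),
    fun c => ?_, hFDelta, hFDelta ▸ ncard_one_union_choose_two_add_two n⟩
  obtain ⟨_, ⟨x, -, y, -, hxy, rfl⟩, rfl⟩ := hf.surjOn (mem_univ c)
  exact ⟨x, y, hxy, rfl⟩
end

section
/- Let Δ' be an edge-colouring of the complete graph G on vertex set V with a distinguished vertex x', using m colours in total, and suppose some vertex v ∈ V\{x'} satisfies ρ(v) ≥ (1+α)√(2m) for a real α > 0. Then |G'_Δ'(G)| ≥ (1+α)√(2m), where G'_Δ'(G) = { γ(S) : x' ∈ S ⊆ V } and γ(S) counts the colours (including the colour of x') on edges inside S. -/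
/-- The set of colours appearing on edges inside `S`. -/
def colorsIn {V : Type*} (Δ' : V → V → ℕ) (S : Set V) : Set ℕ :=
  {c | ∃ x ∈ S, ∃ y ∈ S, x ≠ y ∧ Δ' x y = c}

/-- `γ(S)` for a special colouring: the number of colours on edges inside `S`
together with the colour `cx` of the special vertex. -/
noncomputable def gammaSp {V : Type*} (Δ' : V → V → ℕ) (cx : ℕ) (S : Set V) : ℕ :=
  ({cx} ∪ colorsIn Δ' S).ncard

/-- `G'_{Δ'}(G)`: all values `γ(S)` over sets `S` containing the special vertex. -/
def GSet {V : Type*} (Δ' : V → V → ℕ) (cx : ℕ) (x' : V) : Set ℕ :=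
  {k | ∃ S : Set V, x' ∈ S ∧ gammaSp Δ' cx S = k}

/-- `ρ(v)`: the colours other than the special colour `cx` that appear only on
edges incident with `v`. -/
def rhoSet {V : Type*} (Δ' : V → V → ℕ) (cx : ℕ) (v : V) : Set ℕ :=
  {c | c ≠ cx ∧ (∃ y, y ≠ v ∧ Δ' v y = c) ∧
    ∀ x y, x ≠ y → Δ' x y = c → x = v ∨ y = v}

/-!
Remove from `ρ(v)` the colour of the edge `v x'` and, for each remaining colour `c`, fix a
neighbour `w c` of `v` with `Δ' v (w c) = c`. For a set `U` of such colours put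
`S U = {x', v} ∪ w(U)`. A colour of `U` can only occur inside `S U` on the edge `v (w c)`, so
`U ↦ γ(S U)` is strictly monotone on the subsets of the `k ≥ ρ(v) - 1` remaining colours, and
a strictly monotone function on the subsets of a `k`-set takes at least `k + 1` values.
-/

theorem Finset.card_lt_card_image_powerset_of_strictMonoOn {α β : Type*} [DecidableEq α]
    [DecidableEq β] [Preorder β] {f : Finset α → β} {T : Finset α}
    (hf : StrictMonoOn f (T.powerset : Set (Finset α))) :
    T.card < (T.powerset.image f).card := by
  induction T using Finset.induction_on with
  | empty => simp
  | insert a T ha ih =>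
    have hsub : T.powerset ⊆ (insert a T).powerset :=
      Finset.powerset_mono.2 (Finset.subset_insert a T)
    have hnew : f (insert a T) ∉ T.powerset.image f := by
      simp only [Finset.mem_image, Finset.mem_powerset, not_exists, not_and]
      intro U hU hfU
      exact (hf (Finset.mem_coe.2 (hsub (Finset.mem_powerset.2 hU)))
        (Finset.mem_coe.2 (Finset.mem_powerset_self _))
        (hU.trans_ssubset (Finset.ssubset_insert ha))).ne hfU
    have hlt := ih (hf.mono (Finset.coe_subset.2 hsub))
    calc (insert a T).card = T.card + 1 := Finset.card_insert_of_notMem ha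
      _ < (T.powerset.image f).card + 1 := by omega
      _ = (insert (f (insert a T)) (T.powerset.image f)).card :=
        (Finset.card_insert_of_notMem hnew).symm
      _ ≤ ((insert a T).powerset.image f).card :=
        Finset.card_le_card (Finset.insert_subset
          (Finset.mem_image_of_mem f (Finset.mem_powerset_self _))
          (Finset.image_subset_image hsub))

section

variable {V : Type*} {Δ' : V → V → ℕ} {cx : ℕ}

theorem colorsIn_mono {A B : Set V} (h : A ⊆ B) : colorsIn Δ' A ⊆ colorsIn Δ' B := by
  rintro c ⟨x, hx, y, hy, hxy, rfl⟩
  exact ⟨x, h hx, y, h hy, hxy, rfl⟩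

theorem colorsIn_finite [Finite V] (S : Set V) : (colorsIn Δ' S).Finite :=
  (Set.finite_range fun p : V × V => Δ' p.1 p.2).subset <| by
    rintro c ⟨x, -, y, -, -, rfl⟩
    exact ⟨(x, y), rfl⟩

theorem gammaSp_lt_gammaSp [Finite V] {A B : Set V} (hAB : A ⊆ B) {c : ℕ}
    (hB : c ∈ colorsIn Δ' B) (hA : c ∉ {cx} ∪ colorsIn Δ' A) :
    gammaSp Δ' cx A < gammaSp Δ' cx B :=
  Set.ncard_lt_ncard
    ⟨Set.union_subset_union_right _ (colorsIn_mono hAB), fun h => hA (h (Or.inr hB))⟩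
    ((Set.finite_singleton cx).union (colorsIn_finite B))

theorem GSet_finite [Finite V] (x' : V) : (GSet Δ' cx x').Finite :=
  (Set.finite_range (gammaSp Δ' cx)).subset <| by
    rintro k ⟨S, -, rfl⟩
    exact ⟨S, rfl⟩

theorem rhoSet_finite [Finite V] (v : V) : (rhoSet Δ' cx v).Finite :=
  (Set.finite_range (Δ' v)).subset <| by
    rintro c ⟨-, ⟨y, -, rfl⟩, -⟩
    exact ⟨y, rfl⟩

theorem exists_ne_color_eq_of_mem_rhoSet_of_mem_colorsIn (hsym : ∀ x y, Δ' x y = Δ' y x)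
    {v : V} {S : Set V} {c : ℕ} (hρ : c ∈ rhoSet Δ' cx v) (hc : c ∈ colorsIn Δ' S) :
    ∃ y ∈ S, y ≠ v ∧ Δ' v y = c := by
  obtain ⟨x, hx, y, hy, hxy, rfl⟩ := hc
  rcases hρ.2.2 x y hxy rfl with rfl | rfl
  · exact ⟨y, hy, hxy.symm, rfl⟩
  · exact ⟨x, hx, hxy, hsym _ _⟩

theorem strictMonoOn_gammaSp_insert_insert_image [Finite V] (hsym : ∀ x y, Δ' x y = Δ' y x)
    {x' v : V} {T : Finset ℕ} {w : ℕ → V}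
    (hT : ∀ c ∈ T, c ∈ rhoSet Δ' cx v ∧ c ≠ Δ' v x')
    (hw : ∀ c ∈ T, w c ≠ v ∧ Δ' v (w c) = c) :
    StrictMonoOn (fun U : Finset ℕ => gammaSp Δ' cx (insert x' (insert v (w '' U))))
      (T.powerset : Set (Finset ℕ)) := by
  intro U' _ U hU hlt
  obtain ⟨d, hdU, hdU'⟩ := Finset.exists_of_ssubset hlt
  have hUT : U ⊆ T := Finset.mem_powerset.1 hU
  obtain ⟨hdρ, hdx'⟩ := hT d (hUT hdU)
  obtain ⟨hwdv, hwd⟩ := hw d (hUT hdU)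
  refine gammaSp_lt_gammaSp (Set.insert_subset_insert (Set.insert_subset_insert
      (Set.image_mono (Finset.coe_subset.2 hlt.subset))))
    ⟨v, .inr (.inl rfl), w d, .inr (.inr ⟨d, hdU, rfl⟩), hwdv.symm, hwd⟩ ?_
  rintro (hcx | hd)
  · exact hdρ.1 hcx
  obtain ⟨y, hy, hyv, hyd⟩ := exists_ne_color_eq_of_mem_rhoSet_of_mem_colorsIn hsym hdρ hd
  rcases hy with rfl | rfl | ⟨e, he, rfl⟩
  · exact hdx' hyd.symm
  · exact hyv rfl
  · rw [(hw e (hUT (hlt.subset he))).2] at hyd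
    exact hdU' (hyd ▸ he)

theorem ncard_rhoSet_le_ncard_GSet [Finite V] (hsym : ∀ x y, Δ' x y = Δ' y x) (x' v : V) :
    (rhoSet Δ' cx v).ncard ≤ (GSet Δ' cx x').ncard := by
  classical
  obtain ⟨T, hT⟩ : ∃ T : Finset ℕ, ↑T = rhoSet Δ' cx v \ {Δ' v x'} :=
    (rhoSet_finite v).sdiff.exists_finset_coe
  have hTρ : ∀ c ∈ T, c ∈ rhoSet Δ' cx v ∧ c ≠ Δ' v x' := fun c hc => by
    have hc' : c ∈ (T : Set ℕ) := hc
    rw [hT] at hc'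
    exact ⟨hc'.1, hc'.2⟩
  have hw : ∀ c, ∃ w : V, c ∈ T → w ≠ v ∧ Δ' v w = c := fun c => by
    by_cases hc : c ∈ T
    · obtain ⟨w, hwv, hwc⟩ := (hTρ c hc).1.2.1
      exact ⟨w, fun _ => ⟨hwv, hwc⟩⟩
    · exact ⟨v, fun h => absurd h hc⟩
  choose w hw using hw
  calc (rhoSet Δ' cx v).ncard ≤ T.card + 1 := by
        have := Set.pred_ncard_le_ncard_sdiff_singleton (rhoSet Δ' cx v) (Δ' v x')
        rw [← hT, Set.ncard_coe_finset] at this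
        omega
    _ ≤ (T.powerset.image fun U : Finset ℕ =>
          gammaSp Δ' cx (insert x' (insert v (w '' U)))).card :=
        Finset.card_lt_card_image_powerset_of_strictMonoOn
          (strictMonoOn_gammaSp_insert_insert_image hsym hTρ hw)
    _ ≤ (GSet Δ' cx x').ncard := by
        rw [← Set.ncard_coe_finset]
        refine Set.ncard_le_ncard ?_ (GSet_finite x')
        intro k hk
        obtain ⟨U, -, rfl⟩ := Finset.mem_image.1 hk
        exact ⟨_, Set.mem_insert _ _, rfl⟩

end

theorem stmt16_general {V : Type*} [Fintype V] (x' : V) (cx : ℕ)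
    (Δ' : V → V → ℕ) (hsym : ∀ x y, Δ' x y = Δ' y x)
    (m : ℕ)
    (α : ℝ)
    (v : V)
    (hρ : (1 + α) * Real.sqrt (2 * m) ≤ ((rhoSet Δ' cx v).ncard : ℝ)) :
    (1 + α) * Real.sqrt (2 * m) ≤ ((GSet Δ' cx x').ncard : ℝ) :=
  hρ.trans (by exact_mod_cast ncard_rhoSet_le_ncard_GSet hsym x' v)

/-- If some vertex `v ≠ x'` of a special `m`-colouring satisfies
`ρ(v) ≥ (1+α)√(2m)`, then `|G'_{Δ'}(G)| ≥ (1+α)√(2m)`. -/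
theorem stmt16 {V : Type*} [Fintype V] [DecidableEq V] (x' : V) (cx : ℕ)
    (Δ' : V → V → ℕ) (hsym : ∀ x y, Δ' x y = Δ' y x)
    (m : ℕ) (hm : ({cx} ∪ colorsIn Δ' (Set.univ : Set V)).ncard = m)
    (α : ℝ) (hα : 0 < α)
    (v : V) (hv : v ≠ x')
    (hρ : (1 + α) * Real.sqrt (2 * m) ≤ ((rhoSet Δ' cx v).ncard : ℝ)) :
    (1 + α) * Real.sqrt (2 * m) ≤ ((GSet Δ' cx x').ncard : ℝ) :=
  stmt16_general x' cx Δ' hsym m α v hρ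
end
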